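/- Let G be a subgroup of Homeo₊(S¹) admitting a G-invariant Borel probability measure on S¹ (this holds in particular whenever G is amenable, e.g. nilpotent or solvable). If every element of G has a non-empty fixed-point set, then G has a global fixed point, i.e. Fix(G) = ∩_{φ∈G} Fix(φ) ≠ ∅. Indeed, for any G-invariant Borel probability measure μ one has supp(μ) ⊆ Fix(G). -/

import Mathlib

/-!
Let `φ ∈ G` fix `[r]` and normalise its lift `F` so that `F r = r`, hence `F (r + 1) = r + 1`.
If `x = [t]` with `t ∈ (r, r + 1)` is moved by `φ`, say `F t > t`, pick `s < t` so close to `t`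
that `F s > t`. All forward iterates of the interval `(s, F s) ∋ t` lie in `(F s, r + 1)`, so its
image is an open neighbourhood of `x` in the circle that never returns to itself under `φ`.
By Poincaré recurrence a `φ`-invariant finite measure gives it measure zero, so `x ∉ supp μ`.
Finally, the support of a probability measure is nonempty.
-/

open MeasureTheory

noncomputable section

/-- The group of self-homeomorphisms of a topological space. -/
noncomputable instance homeoGroup {X : Type*} [TopologicalSpace X] : Group (X ≃ₜ X) where
  mul f g := g.trans f
  one := Homeomorph.refl X
  inv := Homeomorph.symm
  mul_assoc _ _ _ := Homeomorph.ext fun _ => rfl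
  one_mul _ := Homeomorph.ext fun _ => rfl
  mul_one _ := Homeomorph.ext fun _ => rfl
  inv_mul_cancel f := Homeomorph.ext f.symm_apply_apply

/-- The circle ℝ/ℤ. -/
abbrev S1 : Type := AddCircle (1 : ℝ)

/-- The support of a measure: points all whose neighbourhoods have positive measure. -/
def measSupport {X : Type*} [TopologicalSpace X] [MeasurableSpace X] (μ : Measure X) :
    Set X := {x | ∀ U ∈ nhds x, μ U ≠ 0}

/-- An orientation-preserving circle homeomorphism: it admits a continuous strictly
increasing lift `F : ℝ → ℝ` commuting with the unit translation. -/
def OrientationPreservingCircle (f : S1 → S1) : Prop :=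
  ∃ F : ℝ → ℝ, Continuous F ∧ StrictMono F ∧ (∀ x, F (x + 1) = F x + 1) ∧
    ∀ x : ℝ, ((F x : S1)) = f ↑x

open Set Filter Topology Function

section Order

variable {α : Type*} [LinearOrder α] [TopologicalSpace α] [OrderTopology α] [DenselyOrdered α]
  [NoMinOrder α] {F : α → α} {a b t : α}

theorem StrictMono.exists_lt_iterate_lt_of_lt_apply (hF : StrictMono F) (hFt : ContinuousAt F t)
    (hat : a < t) (htF : t < F t) (hb : F b = b) (htb : t < b) :
    ∃ s, a < s ∧ s < t ∧ t < F s ∧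
      ∀ u, s < u → u < F s → ∀ m ≠ 0, F s < F^[m] u ∧ F^[m] u < b := by
  have hIoo : ∀ᶠ s in 𝓝[<] t, s ∈ Ioo a t := Ioo_mem_nhdsLT hat
  have hFs : ∀ᶠ s in 𝓝[<] t, t < F s :=
    nhdsWithin_le_nhds (hFt.eventually (lt_mem_nhds htF))
  obtain ⟨s, ⟨has, hst⟩, htFs⟩ := (hIoo.and hFs).exists
  refine ⟨s, has, hst, htFs, fun u hsu huF m hm => ⟨?_, ?_⟩⟩
  · calc F s = F^[1] s := rfl
      _ ≤ F^[m] s := hF.monotone.monotone_iterate_of_le_map (hst.trans htFs).le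
          (Nat.one_le_iff_ne_zero.mpr hm)
      _ < F^[m] u := hF.iterate m hsu
  · calc F^[m] u < F^[m] b := hF.iterate m (huF.trans (hb ▸ hF (hst.trans htb)))
      _ = b := iterate_fixed hb m

theorem StrictMono.exists_isOpen_iterate_mem_Ioo_diff [NoMaxOrder α] (hF : StrictMono F)
    (hFt : ContinuousAt F t) (ha : F a = a) (hb : F b = b) (ht : t ∈ Ioo a b) (hFt_ne : F t ≠ t) :
    ∃ I, IsOpen I ∧ t ∈ I ∧ I ⊆ Ioo a b ∧ ∀ u ∈ I, ∀ m ≠ 0, F^[m] u ∈ Ioo a b \ I := by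
  rcases hFt_ne.lt_or_gt with hlt | hgt
  · obtain ⟨s, hbs, hts, hFst, hiter⟩ : ∃ s, s < b ∧ t < s ∧ F s < t ∧
        ∀ u, u < s → F s < u → ∀ m ≠ 0, F^[m] u < F s ∧ a < F^[m] u :=
      StrictMono.exists_lt_iterate_lt_of_lt_apply (α := αᵒᵈ) hF.dual hFt ht.2 hlt ha ht.1
    have hFsa : a < F s := ha ▸ hF (ht.1.trans hts)
    refine ⟨Ioo (F s) s, isOpen_Ioo, ⟨hFst, hts⟩, Ioo_subset_Ioo hFsa.le hbs.le, ?_⟩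
    intro u ⟨hFsu, hus⟩ m hm
    obtain ⟨hmFs, hma⟩ := hiter u hus hFsu m hm
    exact ⟨⟨hma, hmFs.trans (hFst.trans (hts.trans hbs))⟩, fun h => h.1.not_gt hmFs⟩
  · obtain ⟨s, has, hst, htFs, hiter⟩ :=
      hF.exists_lt_iterate_lt_of_lt_apply hFt ht.1 hgt hb ht.2
    have hFsb : F s < b := hb ▸ hF (hst.trans ht.2)
    refine ⟨Ioo s (F s), isOpen_Ioo, ⟨hst, htFs⟩, Ioo_subset_Ioo has.le hFsb.le, ?_⟩
    intro u ⟨hsu, huF⟩ m hm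
    obtain ⟨hFsm, hmb⟩ := hiter u hsu huF m hm
    exact ⟨⟨has.trans (hst.trans (htFs.trans hFsm)), hmb⟩, fun h => h.2.not_gt hFsm⟩

end Order

theorem MeasureTheory.MeasurePreserving.measure_eq_zero_of_iterate_notMem {X : Type*}
    [MeasurableSpace X] {μ : Measure X} [IsFiniteMeasure μ] {f : X → X}
    (hf : MeasurePreserving f μ μ) {s : Set X} (hs : NullMeasurableSet s μ)
    (hwander : ∀ x ∈ s, ∀ m ≠ 0, f^[m] x ∉ s) : μ s = 0 := by
  by_contra hs₀
  obtain ⟨x, hx, m, hm, hmx⟩ := hf.exists_mem_iterate_mem hs hs₀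
  exact hwander x hx m hm hmx

theorem measSupport_eq_support {X : Type*} [TopologicalSpace X] [MeasurableSpace X]
    (μ : Measure X) : measSupport μ = μ.support := by
  ext x
  simp [measSupport, Measure.mem_support_iff_forall, pos_iff_ne_zero]

theorem OrientationPreservingCircle.exists_lift_fixing {φ : S1 → S1}
    (hφ : OrientationPreservingCircle φ) {r : ℝ} (hr : φ r = r) :
    ∃ F : ℝ → ℝ, Continuous F ∧ StrictMono F ∧ F r = r ∧ F (r + 1) = r + 1 ∧
      Semiconj ((↑) : ℝ → S1) F φ := by
  obtain ⟨F, hFc, hFm, hF1, hlift⟩ := hφ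
  obtain ⟨n, hn⟩ : ∃ n : ℤ, n • (1 : ℝ) = F r - r :=
    (AddCircle.coe_eq_zero_iff 1).mp (by rw [AddCircle.coe_sub, hlift, hr, sub_self])
  have hn0 : ((n : ℝ) : S1) = 0 := (AddCircle.coe_eq_zero_iff 1).mpr ⟨n, by simp⟩
  simp only [zsmul_one] at hn
  refine ⟨fun y => F y - n, hFc.sub continuous_const, fun u v huv => sub_lt_sub_right (hFm huv) _,
    by linarith, by simp only [hF1]; linarith, fun y => ?_⟩
  rw [AddCircle.coe_sub, hn0, sub_zero, hlift]

theorem notMem_measSupport_of_apply_ne {μ : Measure S1} [IsFiniteMeasure μ] {φ : S1 → S1}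
    (hφ : OrientationPreservingCircle φ) (hμ : MeasurePreserving φ μ μ) (hfix : ∃ x, φ x = x)
    {x : S1} (hx : φ x ≠ x) : x ∉ measSupport μ := by
  obtain ⟨x₀, hx₀⟩ := hfix
  obtain ⟨r, rfl⟩ := QuotientAddGroup.mk_surjective x₀
  obtain ⟨F, hFc, hFm, hFr, hFr1, hlift⟩ := hφ.exists_lift_fixing hx₀
  obtain ⟨t, ⟨hrt, htr⟩, rfl⟩ : ∃ t ∈ Ico r (r + 1), (t : S1) = x :=
    ⟨_, (AddCircle.equivIco 1 r x).2, (AddCircle.equivIco 1 r).symm_apply_apply x⟩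
  have ht : t ∈ Ioo r (r + 1) := ⟨hrt.lt_of_ne (by rintro rfl; exact hx hx₀), htr⟩
  have hFt : F t ≠ t := fun h => hx (by rw [← hlift, h])
  obtain ⟨I, hIo, htI, hIab, hwander⟩ :=
    hFm.exists_isOpen_iterate_mem_Ioo_diff hFc.continuousAt hFr hFr1 ht hFt
  have hV : IsOpen (((↑) : ℝ → S1) '' I) := QuotientAddGroup.isOpenMap_coe I hIo
  refine fun hsupp => hsupp _ (hV.mem_nhds ⟨t, htI, rfl⟩)
    (hμ.measure_eq_zero_of_iterate_notMem hV.measurableSet.nullMeasurableSet ?_)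
  rintro _ ⟨u, hu, rfl⟩ m hm ⟨v, hv, hvu⟩
  rw [← (hlift.iterate_right m) u] at hvu
  have hmem := hwander u hu m hm
  rw [AddCircle.coe_eq_coe_iff_of_mem_Ico (Ioo_subset_Ico_self (hIab hv))
    (Ioo_subset_Ico_self hmem.1)] at hvu
  exact hmem.2 (hvu ▸ hv)

/-- **Proposition (T1:1:circle).** Let `G` be a subgroup of `Homeo₊(S¹)` admitting a
`G`-invariant Borel probability measure `μ` (e.g. `G` amenable). If every element of
`G` has a fixed point, then `supp(μ) ⊆ Fix(G)`; in particular `Fix(G) ≠ ∅`. -/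
theorem stmt_18
    (G : Subgroup (S1 ≃ₜ S1))
    (hor : ∀ ψ ∈ G, OrientationPreservingCircle (⇑ψ))
    (μ : Measure S1) (hprob : IsProbabilityMeasure μ)
    (hinv : ∀ ψ ∈ G, MeasurePreserving (⇑ψ) μ μ)
    (hfix : ∀ ψ ∈ G, ∃ x : S1, ψ x = x) :
    measSupport μ ⊆ {x : S1 | ∀ ψ ∈ G, ψ x = x} ∧
    {x : S1 | ∀ ψ ∈ G, ψ x = x}.Nonempty := by
  have hsupp : measSupport μ ⊆ {x : S1 | ∀ ψ ∈ G, ψ x = x} := fun x hx ψ hψ => by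
    by_contra hψx
    exact notMem_measSupport_of_apply_ne (hor ψ hψ) (hinv ψ hψ) (hfix ψ hψ) hψx hx
  refine ⟨hsupp, Nonempty.mono hsupp ?_⟩
  rw [measSupport_eq_support]
  exact Measure.nonempty_support (IsProbabilityMeasure.ne_zero μ)
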